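/- arXiv:2307.10548 — 2 statements merged into one kernel-verified Lean document; each statement's English description precedes it below -/
import Mathlib

section
/- Let G be a graph, B a PSD forcing set of size k, and F a propagating family of PSD forces for B on G. For every vertex x of G, if H is the induced subgraph on the vertices of the path bundle of F induced by x, then pt(H,B) ≤ pt₊(G,B); moreover, if x is among the last vertices to be forced (x ∈ B^(pt₊(G,B))), then pt₊(G,B) ≤ |V(H)| − k. -/
namespace ZF

variable {V : Type*} [Fintype V] [DecidableEq V]

/-- A valid standard zero forcing force within the vertex set `U`, given blue set `B`:
`u` is blue, `v` is its unique white neighbor in `U`. -/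
def ZFValid (G : SimpleGraph V) (U B : Set V) (u v : V) : Prop :=
  u ∈ U ∧ v ∈ U ∧ u ∈ B ∧ v ∉ B ∧ G.Adj u v ∧
    ∀ w ∈ U, G.Adj u w → w ∉ B → w = v

/-- `whiteConn G U B a b` : `a` and `b` are joined by a walk through white
(non-blue) vertices of `U` (possibly trivial). -/
def whiteConn (G : SimpleGraph V) (U B : Set V) : V → V → Prop :=
  Relation.ReflTransGen (fun a b => G.Adj a b ∧ a ∈ U ∧ b ∈ U ∧ a ∉ B ∧ b ∉ B)

/-- A valid PSD force within the vertex set `U`, given blue set `B`: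
`u` is blue and `v` is the unique neighbor of `u` in the component of the
white subgraph containing `v`. -/
def PSDValid (G : SimpleGraph V) (U B : Set V) (u v : V) : Prop :=
  u ∈ U ∧ v ∈ U ∧ u ∈ B ∧ v ∉ B ∧ G.Adj u v ∧
    ∀ w ∈ U, G.Adj u w → w ∉ B → whiteConn G U B v w → w = v

/-- One propagation step for a generic color change rule `valid`. -/
def step (valid : Set V → V → V → Prop) (B : Set V) : Set V :=
  B ∪ {v | ∃ u, valid B u v}

/-- Iterated propagation. -/
def iter (valid : Set V → V → V → Prop) (B : Set V) : ℕ → Set V :=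
  fun k => (step valid)^[k] B

/-- `B ⊆ U` is a forcing set of the induced subgraph on `U` for the rule `valid`. -/
def IsForcingSet (valid : Set V → V → V → Prop) (U B : Set V) : Prop :=
  B ⊆ U ∧ ∃ k, U ⊆ iter valid B k

/-- Propagation time of the set `B` for rule `valid` on the induced subgraph on `U`. -/
noncomputable def propTime (valid : Set V → V → V → Prop) (U B : Set V) : ℕ :=
  sInf {k | U ⊆ iter valid B k}

/-- Vertices blue after `k` time-steps of the family of forces `F`, starting from `B`. -/
def expand (B : Set V) (F : ℕ → Set (V × V)) : ℕ → Set V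
  | 0 => B
  | k + 1 => expand B F k ∪ {v | ∃ u, (u, v) ∈ F (k + 1)}

/-- A relaxed chronology of forces (for the rule `valid`) for the forcing set `B`
on the induced subgraph on `U`, with completion time `K`: at each time-step an
arbitrary subset of the currently valid forces is performed (no vertex being
forced twice in one step), and all of `U` is blue after step `K`. -/
structure RelaxedChron (valid : Set V → V → V → Prop) (U B : Set V)
    (K : ℕ) (F : ℕ → Set (V × V)) : Prop where
  subset : B ⊆ U
  init : F 0 = ∅
  bound : ∀ k, K < k → F k = ∅
  forcesValid : ∀ k < K, ∀ u v, (u, v) ∈ F (k + 1) → valid (expand B F k) u v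
  uniqueForcer : ∀ k u₁ u₂ v, (u₁, v) ∈ F k → (u₂, v) ∈ F k → u₁ = u₂
  complete : U ⊆ expand B F K

/-- The underlying set of forces of a relaxed chronology. -/
def forcesOf (F : ℕ → Set (V × V)) (K : ℕ) : Set (V × V) :=
  {p | ∃ k, 1 ≤ k ∧ k ≤ K ∧ p ∈ F k}

/-- The terminus of a relaxed chronology: the vertices (of `U`) performing no force. -/
def terminus (U : Set V) (F : ℕ → Set (V × V)) (K : ℕ) : Set V :=
  {v ∈ U | ∀ u, (v, u) ∉ forcesOf F K}

/-- The reversal of a relaxed chronology: each force is reversed and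
the order of the time-steps is reversed. -/
def revChron (F : ℕ → Set (V × V)) (K : ℕ) : ℕ → Set (V × V) :=
  fun k => if 1 ≤ k ∧ k ≤ K then {p | (p.2, p.1) ∈ F (K - k + 1)} else ∅

/-- One round of performing all currently valid forces from the set of forces `S`. -/
def forceStep (valid : Set V → V → V → Prop) (S : Set (V × V)) (B : Set V) : Set V :=
  B ∪ {v | ∃ u, (u, v) ∈ S ∧ valid B u v}

def forceIter (valid : Set V → V → V → Prop) (S : Set (V × V)) (B : Set V) : ℕ → Set V :=
  fun t => (forceStep valid S)^[t] B

/-- Propagation time of a set of forces `S` for starting set `B` on `U`. -/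
noncomputable def ptForces (valid : Set V → V → V → Prop) (U : Set V)
    (S : Set (V × V)) (B : Set V) : ℕ :=
  sInf {t | U ⊆ forceIter valid S B t}

/-- `v` is active at time-step `k` of the relaxed chronology `F`:
it is blue after step `k` and has not yet performed a force. -/
def activeAt (B : Set V) (F : ℕ → Set (V × V)) (v : V) (k : ℕ) : Prop :=
  v ∈ expand B F k ∧ ∀ j ≤ k, ∀ u, (v, u) ∉ F j

/-- The zero forcing number. -/
noncomputable def Z (G : SimpleGraph V) : ℕ :=
  sInf {n | ∃ B : Set V, B.ncard = n ∧ IsForcingSet (ZFValid G Set.univ) Set.univ B}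

/-- The PSD forcing number. -/
noncomputable def Zplus (G : SimpleGraph V) : ℕ :=
  sInf {n | ∃ B : Set V, B.ncard = n ∧ IsForcingSet (PSDValid G Set.univ) Set.univ B}

/-- Standard `m`-propagation time `pt(G,m)`. -/
noncomputable def ptm (G : SimpleGraph V) (m : ℕ) : ℕ :=
  sInf {t | ∃ B : Set V, B.ncard = m ∧ IsForcingSet (ZFValid G Set.univ) Set.univ B ∧
    propTime (ZFValid G Set.univ) Set.univ B = t}

/-- PSD `m`-propagation time `pt₊(G,m)`. -/
noncomputable def ptplusm (G : SimpleGraph V) (m : ℕ) : ℕ :=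
  sInf {t | ∃ B : Set V, B.ncard = m ∧ IsForcingSet (PSDValid G Set.univ) Set.univ B ∧
    propTime (PSDValid G Set.univ) Set.univ B = t}

/-- Standard propagation time `pt(G)`. -/
noncomputable def pt (G : SimpleGraph V) : ℕ := ptm G (Z G)

/-- PSD propagation time `pt₊(G)`. -/
noncomputable def ptplus (G : SimpleGraph V) : ℕ := ptplusm G (Zplus G)

/-- PSD throttling number `thr₊(G)`. -/
noncomputable def thrplus (G : SimpleGraph V) : ℕ :=
  sInf {t | ∃ B : Set V, IsForcingSet (PSDValid G Set.univ) Set.univ B ∧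
    t = B.ncard + propTime (PSDValid G Set.univ) Set.univ B}

/-- Closed neighborhood of a set. -/
def closedNbhd (G : SimpleGraph V) (B : Set V) : Set V :=
  B ∪ {v | ∃ u ∈ B, G.Adj u v}

/-- Power domination process: the first step colors the closed neighborhood,
subsequent steps apply the standard zero forcing rule. -/
def pdIter (G : SimpleGraph V) (B : Set V) : ℕ → Set V
  | 0 => B
  | 1 => closedNbhd G B
  | (k + 2) => step (ZFValid G Set.univ) (pdIter G B (k + 1))

/-- `B` is a power dominating set. -/
def IsPDSet (G : SimpleGraph V) (B : Set V) : Prop :=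
  ∃ k, Set.univ ⊆ pdIter G B k

/-- Power propagation time of a set. -/
noncomputable def pdPropTime (G : SimpleGraph V) (B : Set V) : ℕ :=
  sInf {k | Set.univ ⊆ pdIter G B k}

/-- Power `m`-propagation time `ppt(G,m)`. -/
noncomputable def pptm (G : SimpleGraph V) (m : ℕ) : ℕ :=
  sInf {t | ∃ B : Set V, B.ncard = m ∧ IsPDSet G B ∧ pdPropTime G B = t}

/-- Restriction of a family of forces to those with both endpoints in `W`. -/
def restrictF (F : ℕ → Set (V × V)) (W : Set V) : ℕ → Set (V × V) :=
  fun k => {p ∈ F k | p.1 ∈ W ∧ p.2 ∈ W}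

/-- The forcing tree of `b` : all vertices reachable from `b` by a chain of forces in `S`. -/
def treeOf (S : Set (V × V)) (b : V) : Set V :=
  {w | Relation.ReflTransGen (fun a c => (a, c) ∈ S) b w}

open Classical in
/-- The endpoint, after `k` steps, of the path grown from `b ∈ B` in the
path bundle of the relaxed chronology `F` induced by the vertex `x`: the path is
extended by a force from its current endpoint into the component of white
vertices containing `x`, whenever such a force occurs. -/
noncomputable def lastVert (G : SimpleGraph V) (B : Set V) (F : ℕ → Set (V × V))
    (x : V) (b : V) : ℕ → V
  | 0 => b
  | k + 1 =>
    if h : ∃ w, (lastVert G B F x b k, w) ∈ F (k + 1) ∧ x ∉ expand B F k ∧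
        whiteConn G Set.univ (expand B F k) x w
    then h.choose else lastVert G B F x b k

/-- The vertex set of the path bundle of `F` induced by `x`. -/
def bundle (G : SimpleGraph V) (B : Set V) (F : ℕ → Set (V × V)) (x : V) (K : ℕ) : Set V :=
  {v | ∃ b ∈ B, ∃ j ≤ K, lastVert G B F x b j = v}

/-- The path of the bundle grown from `b`, as a list of vertices. -/
noncomputable def bundlePath (G : SimpleGraph V) (B : Set V) (F : ℕ → Set (V × V))
    (x : V) (K : ℕ) (b : V) : List V :=
  ((List.range (K + 1)).map (lastVert G B F x b)).dedup

/-- A nonempty path in `G`, given as a list of distinct consecutively adjacent vertices. -/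
def IsPathList (G : SimpleGraph V) (l : List V) : Prop :=
  l ≠ [] ∧ l.Nodup ∧ l.Chain' G.Adj

/-- `P` is an `(α,β)`-linkage: a collection of pairwise vertex-disjoint paths,
`α` consisting of one endpoint of each path and `β` of the other endpoints. -/
def IsLinkage (G : SimpleGraph V) (α β : Set V) (P : Set (List V)) : Prop :=
  (∀ l ∈ P, IsPathList G l) ∧
  (∀ l ∈ P, ∀ l' ∈ P, l ≠ l' → ∀ v, v ∈ l → v ∉ l') ∧
  (∀ l ∈ P, ∀ l' ∈ P, l.head? = l'.head? → l = l') ∧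
  (∀ l ∈ P, ∀ l' ∈ P, l.getLast? = l'.getLast? → l = l') ∧
  α = {v | ∃ l ∈ P, l.head? = some v} ∧
  β = {v | ∃ l ∈ P, l.getLast? = some v}

/-- `P` is a rigid linkage: for some `α`, `β` it is the unique `(α,β)`-linkage in `G`. -/
def IsRigidLinkage (G : SimpleGraph V) (P : Set (List V)) : Prop :=
  ∃ α β, IsLinkage G α β P ∧ ∀ P', IsLinkage G α β P' → P' = P

/-- A path cover of `G` : `m` vertex-disjoint induced paths covering all vertices,
the `i`-th path having vertices `vtx i 0, …, vtx i (n i − 1)` in path order. -/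
structure IsPathCover (G : SimpleGraph V) (m : ℕ) (n : Fin m → ℕ)
    (vtx : (i : Fin m) → Fin (n i) → V) : Prop where
  pos : ∀ i, 0 < n i
  inj : Function.Injective (fun p : (i : Fin m) × Fin (n i) => vtx p.1 p.2)
  cover : ∀ v : V, ∃ i j, vtx i j = v
  induced : ∀ i (j j' : Fin (n i)),
    G.Adj (vtx i j) (vtx i j') ↔ ((j : ℕ) + 1 = (j' : ℕ) ∨ (j' : ℕ) + 1 = (j : ℕ))

/-- A witness that a path cover is a parallel increasing path cover: a collection of
block partitions of `{0,…,K}`, one per path, compatible with the edges of `G`. -/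
structure IsPIPWitness (G : SimpleGraph V) (m : ℕ) (n : Fin m → ℕ)
    (vtx : (i : Fin m) → Fin (n i) → V) (K : ℕ)
    (A : (i : Fin m) → Fin (n i) → Finset ℕ) : Prop where
  mem : ∀ i j, A i j ⊆ Finset.range (K + 1)
  nonempty : ∀ i j, (A i j).Nonempty
  partition : ∀ i, ∀ x ∈ Finset.range (K + 1), ∃! j, x ∈ A i j
  mono : ∀ i (j j' : Fin (n i)), (j : ℕ) < (j' : ℕ) → ∀ x ∈ A i j, ∀ y ∈ A i j', x < y
  edge : ∀ (i i' : Fin m) j j', i ≠ i' →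
    G.Adj (vtx i j) (vtx i' j') → ((A i j) ∩ (A i' j')).Nonempty

/-- A parallel increasing path cover of `G`. -/
def IsPIP (G : SimpleGraph V) (m : ℕ) (n : Fin m → ℕ)
    (vtx : (i : Fin m) → Fin (n i) → V) : Prop :=
  IsPathCover G m n vtx ∧ ∃ K A, IsPIPWitness G m n vtx K A

/-- The path cover given by `vtx` is the chain set of the family of forces `F` :
the underlying forces are exactly the consecutive pairs along the paths. -/
def IsChainSetOf (m : ℕ) (n : Fin m → ℕ) (vtx : (i : Fin m) → Fin (n i) → V)
    (F : ℕ → Set (V × V)) (K : ℕ) : Prop :=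
  ∀ u w, (u, w) ∈ forcesOf F K ↔
    ∃ (i : Fin m) (j : Fin (n i)) (j' : Fin (n i)),
      u = vtx i j ∧ w = vtx i j' ∧ (j : ℕ) + 1 = (j' : ℕ)

end ZF

/-!
From each `b ∈ B` the bundle path follows the forces whose target lies in the current white
component of `x`. Such a PSD force `u → w` is a standard zero force inside the bundle: a bundle
vertex that is still white in the standard process comes later on its path, hence lies in the
white component of `x`, and PSD validity of `u → w` makes it `w`. So `B` forces the bundle in at
most `pt₊(G,B)` steps.

While `x` is white, the first vertex of its white component to turn blue has a forcer whose force
is already valid at the current time, so, `F` performing all valid forces, some vertex of the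
component is forced at every time step. That vertex is a new vertex of the bundle, which yields
`pt₊(G,B)` distinct bundle vertices outside `B`.
-/

namespace ZF

lemma le_ncard_sdiff_of_exists_new {α : Type*} {s : ℕ → Set α} (hs : Monotone s) {W : Set α}
    (hW : W.Finite) {n : ℕ} (h : ∀ k < n, ∃ v ∈ W, v ∈ s (k + 1) ∧ v ∉ s k) :
    n ≤ (W \ s 0).ncard := by
  have hfin (m : ℕ) : ((W ∩ s m) \ s 0).Finite := (hW.inter_of_left _).sdiff
  suffices ∀ m ≤ n, m ≤ ((W ∩ s m) \ s 0).ncard from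
    (this n le_rfl).trans (Set.ncard_le_ncard (fun v hv => ⟨hv.1.1, hv.2⟩) hW.sdiff)
  intro m hm
  induction m with
  | zero => exact Nat.zero_le _
  | succ m ih =>
    obtain ⟨v, hvW, hv, hvm⟩ := h m (by omega)
    have hsub : insert v ((W ∩ s m) \ s 0) ⊆ (W ∩ s (m + 1)) \ s 0 :=
      Set.insert_subset ⟨⟨hvW, hv⟩, fun h0 => hvm (hs m.zero_le h0)⟩
        fun w hw => ⟨⟨hw.1.1, hs m.le_succ hw.1.2⟩, hw.2⟩
    calc m + 1 ≤ ((W ∩ s m) \ s 0).ncard + 1 := Nat.succ_le_succ (ih (by omega))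
      _ = (insert v ((W ∩ s m) \ s 0)).ncard :=
        (Set.ncard_insert_of_notMem (fun h => hvm h.1.2) (hfin m)).symm
      _ ≤ ((W ∩ s (m + 1)) \ s 0).ncard := Set.ncard_le_ncard hsub (hfin _)

section

variable {V : Type*}

lemma expand_mono (B : Set V) (F : ℕ → Set (V × V)) : Monotone (expand B F) :=
  monotone_nat_of_le_succ fun _ => Set.subset_union_left

lemma iter_mono (valid : Set V → V → V → Prop) (B : Set V) : Monotone (iter valid B) :=
  monotone_nat_of_le_succ fun k => by
    simp only [iter, Function.iterate_succ_apply']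
    exact Set.subset_union_left

lemma mem_expand_cases {B : Set V} {F : ℕ → Set (V × V)} {u : V} {k : ℕ}
    (h : u ∈ expand B F k) :
    u ∈ B ∨ ∃ i < k, u ∉ expand B F i ∧ ∃ u', (u', u) ∈ F (i + 1) := by
  induction k with
  | zero => exact Or.inl h
  | succ k ih =>
    by_cases hk : u ∈ expand B F k
    · exact (ih hk).imp_right fun ⟨i, hi, hui⟩ => ⟨i, by omega, hui⟩
    · exact Or.inr ⟨k, k.lt_succ_self, hk, h.resolve_left hk⟩

variable {G : SimpleGraph V} {U : Set V}

lemma whiteConn.symm {B : Set V} {a b : V} (h : whiteConn G U B a b) : whiteConn G U B b a := by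
  induction h with
  | refl => exact .refl
  | tail _ hr ih => exact .head ⟨hr.1.symm, hr.2.2.1, hr.2.1, hr.2.2.2.2, hr.2.2.2.1⟩ ih

lemma whiteConn.of_superset {B₁ B₂ : Set V} (hB : B₁ ⊆ B₂) {a b : V}
    (h : whiteConn G U B₂ a b) : whiteConn G U B₁ a b :=
  Relation.ReflTransGen.mono (fun _ _ hr => ⟨hr.1, hr.2.1, hr.2.2.1, fun h => hr.2.2.2.1 (hB h),
    fun h => hr.2.2.2.2 (hB h)⟩) _ _ h

lemma whiteConn.notMem {B : Set V} {a b : V} (h : whiteConn G U B a b) (ha : a ∉ B) :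
    b ∉ B := by
  rcases Relation.ReflTransGen.cases_tail h with rfl | ⟨_, _, hr⟩
  exacts [ha, hr.2.2.2.2]

lemma whiteConn.of_component_notMem {B₁ B₂ : Set V} {x b : V}
    (hW : ∀ z, whiteConn G U B₁ x z → z ∉ B₂) (h : whiteConn G U B₁ x b) :
    whiteConn G U B₂ x b := by
  induction h with
  | refl => exact .refl
  | tail h₁ hr ih => exact ih.tail ⟨hr.1, hr.2.1, hr.2.2.1, hW _ h₁, hW _ (h₁.tail hr)⟩

end

lemma RelaxedChron.lt_of_mem {V : Type*} {valid : Set V → V → V → Prop} {U B : Set V} {K : ℕ}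
    {F : ℕ → Set (V × V)} (hF : RelaxedChron valid U B K F) {k : ℕ} {p : V × V}
    (hp : p ∈ F (k + 1)) : k < K := by
  by_contra hk
  rw [hF.bound (k + 1) (by omega)] at hp
  exact hp

def ForcesToward {V : Type*} (G : SimpleGraph V) (B : Set V) (F : ℕ → Set (V × V)) (x : V)
    (k : ℕ) (u w : V) : Prop :=
  (u, w) ∈ F (k + 1) ∧ x ∉ expand B F k ∧ whiteConn G Set.univ (expand B F k) x w

section PSDChronology

variable {V : Type*} {G : SimpleGraph V} {B : Set V} {K : ℕ} {F : ℕ → Set (V × V)} {x : V}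
  (hF : RelaxedChron (PSDValid G Set.univ) Set.univ B K F)
include hF

lemma ForcesToward.psdValid {k : ℕ} {u w : V} (h : ForcesToward G B F x k u w) :
    PSDValid G Set.univ (expand B F k) u w :=
  hF.forcesValid k (hF.lt_of_mem h.1) u w h.1

lemma ForcesToward.unique {j k : ℕ} {u w₁ w₂ : V} (h₁ : ForcesToward G B F x j u w₁)
    (h₂ : ForcesToward G B F x k u w₂) (hjk : j ≤ k) : w₁ = w₂ ∧ j = k := by
  have hval₁ := h₁.psdValid hF
  have hval₂ := h₂.psdValid hF
  have hmono := expand_mono B F hjk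
  have heq : w₂ = w₁ := hval₁.2.2.2.2.2 w₂ trivial hval₂.2.2.2.2.1
    (fun h => hval₂.2.2.2.1 (hmono h)) (h₁.2.2.symm.trans (h₂.2.2.of_superset hmono))
  refine ⟨heq.symm, ?_⟩
  by_contra hne
  exact hval₂.2.2.2.1 (expand_mono B F (by omega : j + 1 ≤ k) (Or.inr ⟨u, heq ▸ h₁.1⟩))

/-- The first vertex of the white component of `x` to turn blue is forced by a force
that is already valid now. -/
lemma exists_psdValid_into_component {k : ℕ} (hx : x ∉ expand B F k) :
    ∃ u v, PSDValid G Set.univ (expand B F k) u v ∧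
      whiteConn G Set.univ (expand B F k) x v := by
  classical
  have hQ : ∃ n, ∃ v, whiteConn G Set.univ (expand B F k) x v ∧ v ∈ expand B F n :=
    ⟨K, x, .refl, hF.complete trivial⟩
  obtain ⟨v, hv, hvn⟩ := Nat.find_spec hQ
  have hmin : ∀ m < Nat.find hQ, ∀ z,
      whiteConn G Set.univ (expand B F k) x z → z ∉ expand B F m :=
    fun m hm z hz hzm => Nat.find_min hQ hm ⟨z, hz, hzm⟩
  have hkn : k < Nat.find hQ := by
    by_contra hnk
    exact hv.notMem hx (expand_mono B F (not_lt.mp hnk) hvn)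
  obtain ⟨m, hm⟩ : ∃ m, Nat.find hQ = m + 1 := Nat.exists_eq_add_one_of_ne_zero (by omega)
  rw [hm] at hvn hkn
  have hWm := hmin m (by omega)
  obtain ⟨u, hu⟩ := hvn.resolve_left (hWm v hv)
  have hval := hF.forcesValid m (hF.lt_of_mem hu) u v hu
  have hvk := hv.notMem hx
  have huk : u ∈ expand B F k := by
    by_contra huk
    exact hWm u (hv.tail ⟨hval.2.2.2.2.1.symm, trivial, trivial, hvk, huk⟩) hval.2.2.1
  refine ⟨u, v, ⟨trivial, trivial, huk, hvk, hval.2.2.2.2.1, ?_⟩, hv⟩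
  intro z _ hadj _ hvz
  have hxz : whiteConn G Set.univ (expand B F k) x z := hv.trans hvz
  exact hval.2.2.2.2.2 z trivial hadj (hWm z hxz)
    ((hv.of_component_notMem hWm).symm.trans (hxz.of_component_notMem hWm))

lemma exists_forcesToward
    (hprop : ∀ k < K, ∀ u v, PSDValid G Set.univ (expand B F k) u v →
      ∃ u', (u', v) ∈ F (k + 1))
    {k : ℕ} (hx : x ∉ expand B F k) : ∃ u w, ForcesToward G B F x k u w := by
  obtain ⟨u, v, hval, hv⟩ := exists_psdValid_into_component hF hx
  have hkK : k < K := by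
    by_contra hkK
    exact hx (expand_mono B F (not_lt.mp hkK) (hF.complete trivial))
  obtain ⟨u', hu'⟩ := hprop k hkK u v hval
  exact ⟨u', v, hu', hx, hv⟩

end PSDChronology

section Bundle

variable {V : Type*} [Fintype V] {G : SimpleGraph V} {B : Set V} {K : ℕ}
  {F : ℕ → Set (V × V)} {x : V}

lemma lastVert_succ_of_not_forcesToward {b : V} {k : ℕ}
    (h : ¬ ∃ w, ForcesToward G B F x k (lastVert G B F x b k) w) :
    lastVert G B F x b (k + 1) = lastVert G B F x b k := by
  rw [lastVert]
  split_ifs with hex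
  exacts [absurd hex h, rfl]

variable (hF : RelaxedChron (PSDValid G Set.univ) Set.univ B K F)
include hF

lemma lastVert_succ_of_forcesToward {b w : V} {k : ℕ}
    (h : ForcesToward G B F x k (lastVert G B F x b k) w) :
    lastVert G B F x b (k + 1) = w := by
  rw [lastVert]
  split_ifs with hex
  · exact (ForcesToward.unique hF hex.choose_spec h le_rfl).1
  · exact absurd ⟨w, h⟩ hex

lemma lastVert_eq_of_forcesToward {b u w : V} {t k : ℕ} (hk : ForcesToward G B F x k u w)
    (ht : lastVert G B F x b t = u) (htk : t ≤ k) : lastVert G B F x b k = u := by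
  suffices ∀ j, t ≤ j → j ≤ k → lastVert G B F x b j = u from this k htk le_rfl
  intro j htj
  induction j, htj using Nat.le_induction with
  | base => exact fun _ => ht
  | succ j _ ih =>
    intro hjk
    have hj := ih (by omega)
    rw [lastVert_succ_of_not_forcesToward, hj]
    rintro ⟨w', hw'⟩
    rw [hj] at hw'
    have := (hw'.unique hF hk (by omega)).2
    omega

lemma ForcesToward.exists_lastVert_eq {k : ℕ} :
    ∀ {u w : V}, ForcesToward G B F x k u w → ∃ b ∈ B, lastVert G B F x b (k + 1) = w := by
  induction k using Nat.strong_induction_on with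
  | _ k ih =>
  intro u w h
  have hval := h.psdValid hF
  suffices ∃ b ∈ B, ∃ t ≤ k, lastVert G B F x b t = u by
    obtain ⟨b, hb, t, htk, ht⟩ := this
    refine ⟨b, hb, lastVert_succ_of_forcesToward hF ?_⟩
    rwa [lastVert_eq_of_forcesToward hF h ht htk]
  rcases mem_expand_cases hval.2.2.1 with hu | ⟨i, hik, hui, u', hu'⟩
  · exact ⟨u, hu, 0, k.zero_le, rfl⟩
  · have hmono := expand_mono B F hik.le
    have hprev : ForcesToward G B F x i u' u :=
      ⟨hu', fun hx => h.2.1 (hmono hx), (h.2.2.of_superset hmono).tail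
        ⟨hval.2.2.2.2.1.symm, trivial, trivial, fun hw => hval.2.2.2.1 (hmono hw), hui⟩⟩
    obtain ⟨b, hb, hbu⟩ := ih i hik hprev
    exact ⟨b, hb, i + 1, hik, hbu⟩

lemma lastVert_mem_initial_or_component {b : V} (k j : ℕ) :
    (∃ i ≤ k, lastVert G B F x b i = lastVert G B F x b j) ∨
      (lastVert G B F x b j ∉ expand B F k ∧
        whiteConn G Set.univ (expand B F k) x (lastVert G B F x b j)) := by
  induction j with
  | zero => exact Or.inl ⟨0, k.zero_le, rfl⟩
  | succ j ih =>
    by_cases hex : ∃ w, ForcesToward G B F x j (lastVert G B F x b j) w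
    · obtain ⟨w, hw⟩ := hex
      rw [lastVert_succ_of_forcesToward hF hw]
      by_cases hjk : j + 1 ≤ k
      · exact Or.inl ⟨j + 1, hjk, lastVert_succ_of_forcesToward hF hw⟩
      · have hmono := expand_mono B F (by omega : k ≤ j)
        exact Or.inr ⟨fun h => (hw.psdValid hF).2.2.2.1 (hmono h), hw.2.2.of_superset hmono⟩
    · rw [lastVert_succ_of_not_forcesToward hex]
      exact ih

lemma zfValid_of_forcesToward {S : Set V} {b w : V} {k : ℕ}
    (hS : ∀ b' ∈ B, ∀ i ≤ k, lastVert G B F x b' i ∈ S) (hb : b ∈ B)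
    (h : ForcesToward G B F x k (lastVert G B F x b k) w) (hwS : w ∉ S) :
    ZFValid G (bundle G B F x K) S (lastVert G B F x b k) w := by
  have hkK := hF.lt_of_mem h.1
  have hval := h.psdValid hF
  refine ⟨⟨b, hb, k, hkK.le, rfl⟩, ⟨b, hb, k + 1, hkK, lastVert_succ_of_forcesToward hF h⟩,
    hS b hb k le_rfl, hwS, hval.2.2.2.2.1, ?_⟩
  rintro _ ⟨b', hb', j, -, rfl⟩ hadj hzS
  rcases lastVert_mem_initial_or_component hF (b := b') k j with ⟨i, hik, hi⟩ | ⟨hzk, hz⟩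
  · exact absurd (hi ▸ hS b' hb' i hik) hzS
  · exact hval.2.2.2.2.2 _ trivial hadj hzk (h.2.2.symm.trans hz)

lemma lastVert_mem_iter {k : ℕ} (hk : k ≤ K) {b : V} (hb : b ∈ B) {j : ℕ} (hj : j ≤ k) :
    lastVert G B F x b j ∈ iter (ZFValid G (bundle G B F x K)) B k := by
  induction k generalizing b j with
  | zero => rw [Nat.le_zero.mp hj]; exact hb
  | succ k ih =>
    have hmono := iter_mono (ZFValid G (bundle G B F x K)) B k.le_succ
    rcases Nat.lt_or_ge j (k + 1) with hjk | hjk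
    · exact hmono (ih (by omega) hb (by omega))
    obtain rfl : j = k + 1 := le_antisymm hj hjk
    by_cases hex : ∃ w, ForcesToward G B F x k (lastVert G B F x b k) w
    · obtain ⟨w, hw⟩ := hex
      rw [lastVert_succ_of_forcesToward hF hw]
      by_cases hwk : w ∈ iter (ZFValid G (bundle G B F x K)) B k
      · exact hmono hwk
      · rw [iter, Function.iterate_succ_apply']
        exact Or.inr ⟨_, zfValid_of_forcesToward hF
          (fun b' hb' i hi => ih (by omega) hb' hi) hb hw hwk⟩
    · rw [lastVert_succ_of_not_forcesToward hex]
      exact hmono (ih (by omega) hb le_rfl)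

lemma bundle_subset_iter :
    bundle G B F x K ⊆ iter (ZFValid G (bundle G B F x K)) B K := by
  rintro _ ⟨b, hb, j, hj, rfl⟩
  exact lastVert_mem_iter hF le_rfl hb hj

end Bundle

end ZF

theorem bundle_pt_bounds_general {V : Type*} [Fintype V]
    (G : SimpleGraph V) (B : Set V) (K : ℕ) (F : ℕ → Set (V × V))
    (hF : ZF.RelaxedChron (ZF.PSDValid G Set.univ) Set.univ B K F)
    (hprop : ∀ k < K, ∀ u v, ZF.PSDValid G Set.univ (ZF.expand B F k) u v →
      ∃ u', (u', v) ∈ F (k + 1))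
    (hK : K = ZF.propTime (ZF.PSDValid G Set.univ) Set.univ B) (x : V) :
    (ZF.IsForcingSet (ZF.ZFValid G (ZF.bundle G B F x K)) (ZF.bundle G B F x K) B ∧
      ZF.propTime (ZF.ZFValid G (ZF.bundle G B F x K)) (ZF.bundle G B F x K) B
        ≤ ZF.propTime (ZF.PSDValid G Set.univ) Set.univ B) ∧
    ((∀ j < K, x ∉ ZF.expand B F j) →
      ZF.propTime (ZF.PSDValid G Set.univ) Set.univ B
        ≤ (ZF.bundle G B F x K).ncard - B.ncard) := by
  have hBH : B ⊆ ZF.bundle G B F x K := fun b hb => ⟨b, hb, 0, K.zero_le, rfl⟩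
  have hH := ZF.bundle_subset_iter hF (x := x)
  refine ⟨⟨⟨hBH, K, hH⟩, hK ▸ Nat.sInf_le hH⟩, fun hx => ?_⟩
  rw [← hK, ← Set.ncard_sdiff hBH]
  refine ZF.le_ncard_sdiff_of_exists_new (ZF.expand_mono B F) (Set.toFinite _) fun k hk => ?_
  obtain ⟨u, w, h⟩ := ZF.exists_forcesToward hF hprop (hx k hk)
  obtain ⟨b, hb, hbw⟩ := h.exists_lastVert_eq hF
  exact ⟨w, hbw ▸ ⟨b, hb, k + 1, hk, rfl⟩, Or.inr ⟨u, h.1⟩, (h.psdValid hF).2.2.2.1⟩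

/-- For a propagating family of PSD forces for `B` and any vertex `x`, the standard
propagation time of `B` on the induced subgraph `H` on the path bundle induced by `x`
is at most `pt₊(G,B)`; moreover, if `x` is forced only at the last time-step, then
`pt₊(G,B) ≤ |V(H)| − |B|`. -/
theorem bundle_pt_bounds {V : Type*} [Fintype V] [DecidableEq V]
    (G : SimpleGraph V) (B : Set V) (K : ℕ) (F : ℕ → Set (V × V))
    (hB : ZF.IsForcingSet (ZF.PSDValid G Set.univ) Set.univ B)
    (hF : ZF.RelaxedChron (ZF.PSDValid G Set.univ) Set.univ B K F)
    (hprop : ∀ k < K, ∀ u v, ZF.PSDValid G Set.univ (ZF.expand B F k) u v →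
      ∃ u', (u', v) ∈ F (k + 1))
    (hK : K = ZF.propTime (ZF.PSDValid G Set.univ) Set.univ B) (x : V) :
    (ZF.IsForcingSet (ZF.ZFValid G (ZF.bundle G B F x K)) (ZF.bundle G B F x K) B ∧
      ZF.propTime (ZF.ZFValid G (ZF.bundle G B F x K)) (ZF.bundle G B F x K) B
        ≤ ZF.propTime (ZF.PSDValid G Set.univ) Set.univ B) ∧
    ((∀ j < K, x ∉ ZF.expand B F j) →
      ZF.propTime (ZF.PSDValid G Set.univ) Set.univ B
        ≤ (ZF.bundle G B F x K).ncard - B.ncard) :=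
  bundle_pt_bounds_general G B K F hF hprop hK x
end

section
/- Let F = (F^(1),...,F^(K)) be a relaxed chronology of standard zero forces for a zero forcing set B of a graph G, and let N ∈ {1,...,K}. Then the set of initial vertices of the reversed chronology rev(F) restricted to the induced subgraph H on the set of vertices whose active times are contained in {0,...,N−1} is a standard zero forcing set of H with propagation time at most N−1. -/
/-- For a relaxed chronology `F` of standard forces and `1 ≤ N ≤ K`, the set of initial
vertices of the reversed chronology restricted to the induced subgraph `H` on the set of
vertices whose active times all precede `N` is a standard zero forcing set of `H` with
propagation time at most `N − 1`. -/
theorem rev_initial_zfs {V : Type*} [Fintype V] [DecidableEq V]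
    (G : SimpleGraph V) (B : Set V) (K : ℕ) (F : ℕ → Set (V × V))
    (hF : ZF.RelaxedChron (ZF.ZFValid G Set.univ) Set.univ B K F)
    (N : ℕ) (hN₁ : 1 ≤ N) (hN₂ : N ≤ K) :
    ZF.IsForcingSet (ZF.ZFValid G {v : V | ∀ k ≤ K, ZF.activeAt B F v k → k < N})
        {v : V | ∀ k ≤ K, ZF.activeAt B F v k → k < N}
        {v ∈ {v : V | ∀ k ≤ K, ZF.activeAt B F v k → k < N} |
          v ∈ ZF.terminus Set.univ F K ∨
          ∃ u, (v, u) ∈ ZF.forcesOf F K ∧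
            u ∉ {v : V | ∀ k ≤ K, ZF.activeAt B F v k → k < N}} ∧
    ZF.propTime (ZF.ZFValid G {v : V | ∀ k ≤ K, ZF.activeAt B F v k → k < N})
        {v : V | ∀ k ≤ K, ZF.activeAt B F v k → k < N}
        {v ∈ {v : V | ∀ k ≤ K, ZF.activeAt B F v k → k < N} |
          v ∈ ZF.terminus Set.univ F K ∨
          ∃ u, (v, u) ∈ ZF.forcesOf F K ∧
            u ∉ {v : V | ∀ k ≤ K, ZF.activeAt B F v k → k < N}}
      ≤ N - 1 := by
  classical
  set H : Set V := {v : V | ∀ k ≤ K, ZF.activeAt B F v k → k < N} with hHdef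
  set B' : Set V := {v ∈ H | v ∈ ZF.terminus Set.univ F K ∨
      ∃ u, (v, u) ∈ ZF.forcesOf F K ∧ u ∉ H} with hB'def
  -- monotonicity of expand
  have hexp_mono : ∀ {j k : ℕ}, j ≤ k → ZF.expand B F j ⊆ ZF.expand B F k := by
    intro j k h
    induction h with
    | refl => exact subset_rfl
    | step _ ih =>
      refine ih.trans ?_
      intro x hx
      exact Or.inl hx
  -- every force is valid
  have hval : ∀ t (a b : V), (a, b) ∈ F t →
      1 ≤ t ∧ t ≤ K ∧ ZF.ZFValid G Set.univ (ZF.expand B F (t - 1)) a b := by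
    intro t a b hm
    have ht0 : 1 ≤ t := by
      rcases Nat.eq_zero_or_pos t with rfl | h
      · rw [hF.init] at hm; exact absurd hm (Set.notMem_empty _)
      · exact h
    have htK : t ≤ K := by
      by_contra h
      rw [hF.bound t (by omega)] at hm
      exact Set.notMem_empty _ hm
    refine ⟨ht0, htK, ?_⟩
    exact hF.forcesValid (t - 1) (by omega) a b
      (by rw [Nat.sub_add_cancel ht0]; exact hm)
  -- a forced vertex is blue at the step of the force
  have hforcedmem : ∀ t (a b : V), (a, b) ∈ F t → b ∈ ZF.expand B F t := by
    intro t a b hm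
    have ht0 : 1 ≤ t := (hval t a b hm).1
    obtain ⟨t', rfl⟩ : ∃ t', t = t' + 1 := ⟨t - 1, by omega⟩
    exact Or.inr ⟨a, hm⟩
  -- minimal forcing step of a vertex of H
  have hmin : ∀ v ∈ H, ∃ t u, (v, u) ∈ F t ∧ (∀ j, j < t → ∀ w, (v, w) ∉ F j) ∧
      1 ≤ t ∧ t ≤ N := by
    intro v hv
    have hne : {t | ∃ u, (v, u) ∈ F t}.Nonempty := by
      by_contra h
      rw [Set.not_nonempty_iff_eq_empty, Set.eq_empty_iff_forall_notMem] at h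
      have hact : ZF.activeAt B F v K := by
        refine ⟨hF.complete (Set.mem_univ v), ?_⟩
        intro j _ u hu
        exact h j ⟨u, hu⟩
      have := hv K le_rfl hact
      omega
    obtain ⟨u, hu⟩ := Nat.sInf_mem hne
    set t := sInf {t | ∃ u, (v, u) ∈ F t} with htdef
    have hminlt : ∀ j, j < t → ∀ w, (v, w) ∉ F j := fun j hj w hw =>
      Nat.notMem_of_lt_sInf hj ⟨w, hw⟩
    obtain ⟨ht1, htK, hvalid⟩ := hval t v u hu
    have hact : ZF.activeAt B F v (t - 1) :=
      ⟨hvalid.2.2.1, fun j hj w => hminlt j (by omega) w⟩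
    have := hv (t - 1) (by omega) hact
    exact ⟨t, u, hu, hminlt, ht1, by omega⟩
  -- a vertex forces only after it was forced
  have hlate : ∀ t (a b : V), (a, b) ∈ F t → ∀ j (c : V), (b, c) ∈ F j → t < j := by
    intro t a b hm j c hj
    obtain ⟨ht1, _, h1⟩ := hval t a b hm
    obtain ⟨hj1, _, h2⟩ := hval j b c hj
    by_contra h
    push_neg at h
    exact h1.2.2.2.1 (hexp_mono (by omega : j - 1 ≤ t - 1) h2.2.2.1)
  -- iteration facts
  have hsub_iter : ∀ (X : Set V) s, X ⊆ ZF.iter (ZF.ZFValid G H) X s := by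
    intro X s
    induction s with
    | zero => exact subset_rfl
    | succ s ih =>
      intro x hx
      show x ∈ (ZF.step (ZF.ZFValid G H))^[s + 1] X
      rw [Function.iterate_succ_apply']
      exact Or.inl (ih hx)
  have hiter_mono : ∀ s, ZF.iter (ZF.ZFValid G H) B' s ⊆
      ZF.iter (ZF.ZFValid G H) B' (s + 1) := by
    intro s x hx
    show x ∈ (ZF.step (ZF.ZFValid G H))^[s + 1] B'
    rw [Function.iterate_succ_apply']
    exact Or.inl hx
  -- main induction
  have key : ∀ s (v : V), v ∈ H → ∀ t u, (v, u) ∈ F t →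
      (∀ j, j < t → ∀ w, (v, w) ∉ F j) → t ≤ N → N ≤ t + s →
      v ∈ ZF.iter (ZF.ZFValid G H) B' s := by
    intro s
    induction s with
    | zero =>
      intro v hv t u hm hminlt htN hNt
      have huH : u ∉ H := by
        intro huH
        obtain ⟨tu, uu, humem, _, _, htuN⟩ := hmin u huH
        have := hlate t v u hm tu uu humem
        omega
      exact ⟨hv, Or.inr ⟨u, ⟨t, (hval t v u hm).1, (hval t v u hm).2.1, hm⟩, huH⟩⟩
    | succ s ih =>
      intro v hv t u hm hminlt htN hNt
      by_cases hc : N ≤ t + s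
      · exact hiter_mono s (ih v hv t u hm hminlt htN hc)
      have hNeq : N = t + s + 1 := by omega
      by_cases hvB : v ∈ ZF.iter (ZF.ZFValid G H) B' s
      · exact hiter_mono s hvB
      by_cases huH : u ∈ H
      · obtain ⟨ht1, htK, hvalid⟩ := hval t v u hm
        obtain ⟨tu, uu, humem, huminlt, htu1, htuN⟩ := hmin u huH
        have htlt : t < tu := hlate t v u hm tu uu humem
        have huB : u ∈ ZF.iter (ZF.ZFValid G H) B' s :=
          ih u huH tu uu humem huminlt htuN (by omega)
        show v ∈ (ZF.step (ZF.ZFValid G H))^[s + 1] B'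
        rw [Function.iterate_succ_apply']
        refine Or.inr ⟨u, huH, hv, huB, hvB, hvalid.2.2.2.2.1.symm, ?_⟩
        intro w hw hadj hwB
        obtain ⟨tw, uw, hwmem, hwminlt, htw1, htwN⟩ := hmin w hw
        have hwlate : ¬ N ≤ tw + s := fun hh =>
          hwB (ih w hw tw uw hwmem hwminlt htwN hh)
        have htwle : tw ≤ t := by omega
        obtain ⟨_, _, hwvalid⟩ := hval tw w uw hwmem
        have huu : u ∉ ZF.expand B F (tw - 1) := fun hh =>
          hvalid.2.2.2.1 (hexp_mono (by omega : tw - 1 ≤ t - 1) hh)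
        have heq : u = uw := hwvalid.2.2.2.2.2 u (Set.mem_univ u) hadj.symm huu
        rw [← heq] at hwmem
        have htw_eq : tw = t := by
          rcases lt_or_eq_of_le htwle with hlt | hh
          · exact absurd (hexp_mono (by omega : tw ≤ t - 1)
              (hforcedmem tw w u hwmem)) hvalid.2.2.2.1
          · exact hh
        rw [htw_eq] at hwmem
        exact hF.uniqueForcer t w v u hwmem hm
      · exact absurd (hsub_iter B' s ⟨hv, Or.inr
          ⟨u, ⟨t, (hval t v u hm).1, (hval t v u hm).2.1, hm⟩, huH⟩⟩) hvB
  have hfin : H ⊆ ZF.iter (ZF.ZFValid G H) B' (N - 1) := by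
    intro v hv
    obtain ⟨t, u, hm, hminlt, ht1, htN⟩ := hmin v hv
    exact key (N - 1) v hv t u hm hminlt htN (by omega)
  exact ⟨⟨fun v hv => hv.1, ⟨N - 1, hfin⟩⟩, Nat.sInf_le hfin⟩
end
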